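/- For every natural number n ≥ 2, the comma category (Δ_{s,≤1})_{/[n]} is connected. More precisely: every object [0] → [n] is connected by a zig-zag of morphisms to an object of the form [1] → [n], and any two morphisms f, g : [1] → [n] are connected by a zig-zag of morphisms in the comma category. -/

import Mathlib

open CategoryTheory

/-- The semisimplicial category `Δ_s`: objects are `[n] = Fin (n+1)` and morphisms
are strictly monotone maps. -/
structure DeltaS where
  len : ℕ

instance : Category DeltaS where
  Hom m n := {f : Fin (m.len + 1) → Fin (n.len + 1) // StrictMono f}
  id m := ⟨id, strictMono_id⟩
  comp f g := ⟨g.1 ∘ f.1, g.2.comp f.2⟩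
  id_comp f := rfl
  comp_id f := rfl
  assoc f g h := rfl

/-- The full subcategory `Δ_{s,≤1}` of `Δ_s` spanned by `[0]` and `[1]`. -/
def DeltaSLe1 := ObjectProperty.FullSubcategory (fun m : DeltaS => m.len ≤ 1)

instance : Category DeltaSLe1 := ObjectProperty.FullSubcategory.category _

/-- The inclusion `Δ_{s,≤1} ⥤ Δ_s`. -/
def deltaSIncl : DeltaSLe1 ⥤ DeltaS := ObjectProperty.ι _

/-!
Every object `u : [k] → [n]` of the comma category receives a morphism from the vertex
`[0] → [n]` picking out `u 0`, and any two vertices `a < b` are joined through the edge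
`[1] → [n]` with endpoints `a, b`. Hence all objects lie in one zig-zag class, and for
`n ≥ 1` that class contains the edge `0 < 1`.
-/

namespace DeltaSLe1

variable {n : ℕ}

def vertexObj : DeltaSLe1 := ⟨⟨0⟩, zero_le_one⟩

def edgeObj : DeltaSLe1 := ⟨⟨1⟩, le_rfl⟩

def vertex (a : Fin (n + 1)) : CostructuredArrow deltaSIncl (DeltaS.mk n) :=
  CostructuredArrow.mk (Y := vertexObj)
    (⟨fun _ => a, Subsingleton.strictMono (α := Fin 1) _⟩ : (⟨0⟩ : DeltaS) ⟶ DeltaS.mk n)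

def edge (a b : Fin (n + 1)) (h : a < b) : CostructuredArrow deltaSIncl (DeltaS.mk n) :=
  CostructuredArrow.mk (Y := edgeObj)
    (⟨![a, b], by simpa [Fin.strictMono_iff_lt_succ] using h⟩ : (⟨1⟩ : DeltaS) ⟶ DeltaS.mk n)

def vertexHom (u : CostructuredArrow deltaSIncl (DeltaS.mk n)) (i : Fin (u.left.obj.len + 1)) :
    vertex (u.hom.1 i) ⟶ u :=
  CostructuredArrow.homMk
    (ObjectProperty.homMk (X := vertexObj) (Y := u.left)
      (⟨fun _ => i, Subsingleton.strictMono (α := Fin 1) _⟩ : (⟨0⟩ : DeltaS) ⟶ u.left.obj))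
    rfl

theorem zigzag_vertex (u : CostructuredArrow deltaSIncl (DeltaS.mk n))
    (i : Fin (u.left.obj.len + 1)) : Zigzag u (vertex (u.hom.1 i)) :=
  Zigzag.of_inv (vertexHom u i)

theorem zigzag_vertex_of_lt {a b : Fin (n + 1)} (h : a < b) : Zigzag (vertex a) (vertex b) :=
  (Zigzag.of_hom (vertexHom (edge a b h) 0)).trans (zigzag_vertex (edge a b h) 1)

theorem zigzag_vertex_vertex (a b : Fin (n + 1)) : Zigzag (vertex a) (vertex b) := by
  rcases lt_trichotomy a b with h | rfl | h
  · exact zigzag_vertex_of_lt h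
  · rfl
  · exact (zigzag_vertex_of_lt h).symm

theorem comma_zigzag (u v : CostructuredArrow deltaSIncl (DeltaS.mk n)) : Zigzag u v :=
  (zigzag_vertex u 0).trans
    ((zigzag_vertex_vertex _ _).trans (zigzag_vertex v 0).symm)

instance : IsConnected (CostructuredArrow deltaSIncl (DeltaS.mk n)) :=
  have : Nonempty (CostructuredArrow deltaSIncl (DeltaS.mk n)) := ⟨vertex 0⟩
  zigzag_isConnected comma_zigzag

end DeltaSLe1

/-- For `n ≥ 2` the comma category `(Δ_{s,≤1})_{/[n]}` is connected: moreover every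
object `[0] → [n]` is connected by a zig-zag to an object of the form `[1] → [n]`, and
any two morphisms `[1] → [n]` are connected by a zig-zag. -/
theorem deltaSLe1_comma_connected (n : ℕ) (hn : 2 ≤ n) :
    CategoryTheory.IsConnected (CostructuredArrow deltaSIncl (DeltaS.mk n)) ∧
    (∀ u : CostructuredArrow deltaSIncl (DeltaS.mk n), u.left.obj.len = 0 →
      ∃ v : CostructuredArrow deltaSIncl (DeltaS.mk n), v.left.obj.len = 1 ∧ Zigzag u v) ∧
    (∀ u v : CostructuredArrow deltaSIncl (DeltaS.mk n),
      u.left.obj.len = 1 → v.left.obj.len = 1 → Zigzag u v) := by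
  have : NeZero n := ⟨by omega⟩
  exact ⟨inferInstance,
    fun u _ => ⟨DeltaSLe1.edge 0 1 Fin.one_pos', rfl, DeltaSLe1.comma_zigzag u _⟩,
    fun u v _ _ => DeltaSLe1.comma_zigzag u v⟩
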